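/- arXiv:2605.06227 — 4 statements merged into one kernel-verified Lean document; each statement's English description precedes it below -/
import Mathlib

section
/- Suppose U⁺ > 0 > U⁻, C⁺ ≥ 0 > C⁻ and U⁺·C⁻ ≥ U⁻·C⁺ (Assumption 2). Then for every q ∈ [0,1], if q·U⁺ + (1−q)·U⁻ ≥ 0 then also q·C⁺ + (1−q)·C⁻ ≥ 0. Consequently, for any success-probability function p : X → [0,1], the set of Extractive Candidates C₂ = {x ∈ X : E[Δ(x)] < 0 and E[u(x)] ≥ 0} is empty. -/
/-- Under Assumption 2 (`U⁺·C⁻ ≥ U⁻·C⁺` with `U⁺ > 0 > U⁻`,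
`C⁺ ≥ 0 > C⁻`), any success probability `q ∈ [0,1]` that yields nonnegative
expected utility also yields nonnegative expected score change; consequently,
for any success-probability function `p : X → [0,1]`, the set of Extractive
Candidates `C₂ = {x | E[Δ(x)] < 0 ∧ E[u(x)] ≥ 0}` is empty. -/
theorem no_extractive_candidates
    (Up Um Cp Cm : ℝ)
    (hUp : 0 < Up) (hUm : Um < 0) (hCp : 0 ≤ Cp) (hCm : Cm < 0)
    (hA2 : Um * Cp ≤ Up * Cm) :
    (∀ q : ℝ, q ∈ Set.Icc (0 : ℝ) 1 →
      0 ≤ q * Up + (1 - q) * Um → 0 ≤ q * Cp + (1 - q) * Cm) ∧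
    (∀ (X : Type) (p : X → ℝ), (∀ x, p x ∈ Set.Icc (0 : ℝ) 1) →
      {x : X | p x * Cp + (1 - p x) * Cm < 0 ∧
        0 ≤ p x * Up + (1 - p x) * Um} = ∅) := by
  have key : ∀ q : ℝ, q ∈ Set.Icc (0 : ℝ) 1 →
      0 ≤ q * Up + (1 - q) * Um → 0 ≤ q * Cp + (1 - q) * Cm := by
    intro q ⟨h0, h1⟩ hu
    nlinarith [mul_nonneg h0 hCp, mul_nonneg (sub_nonneg.2 h1) (le_of_lt (neg_pos.2 hCm))]
  refine ⟨key, fun X p hp => ?_⟩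
  ext x
  simp only [Set.mem_setOf_eq, Set.mem_empty_iff_false, iff_false, not_and, not_le]
  intro hlt
  by_contra hge
  exact absurd (key (p x) (hp x) (not_lt.1 hge)) (not_le.2 hlt)
end

section
/- Fix α ∈ (0,1) and ε ∈ (0, α). Consider the instance with U⁺ = 1, U⁻ = −11/10, C⁺ = 1, C⁻ = −11/10, w_A = w_B = 1/2, where D_A is a point mass at a score x with p(x) = 1 and D_B is a point mass at x' = x − ε with p(x') = 11/21. Then: (i) E[u(x)] = 1, E[Δ(x)] = 1, E[u(x')] = 0, E[Δ(x')] = 0; (ii) OPT = 1/2, attained by selecting all of group A; (iii) every α-fair policy (π_A(x), π_B(x')) satisfies π_A(x) ≤ α − ε, and hence has utility at most (α − ε)/2. Consequently, for this instance 1 − Fair-OPT/OPT ≥ 1 − (α − ε), so in the single-step setting the Price of Fairness satisfies PoF ≥ 1 − α. -/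
/-- **Theorem 3.11, lower bound construction.** For the two-point-mass
instance with `U⁺ = 1`, `U⁻ = −11/10`, `C⁺ = 1`, `C⁻ = −11/10`, equal group weights,
group `A` concentrated at a score `x` with `p(x) = 1` and group `B` concentrated at
`x' = x − ε` with `p(x') = 11/21`: the expected utilities/score changes are
`1, 1, 0, 0`; `OPT = 1/2` (select all of group `A`); every `α`-fair policy
satisfies `π_A(x) ≤ α − ε` and hence has utility at most `(α−ε)/2`; consequently
`1 − Fair-OPT/OPT ≥ 1 − (α − ε) ≥ 1 − α`, so `PoF ≥ 1 − α`. -/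
theorem pof_lower_bound_instance
    (α ε x : ℝ) (hα : α ∈ Set.Ioo (0 : ℝ) 1) (hε : ε ∈ Set.Ioo 0 α)
    (Up Um Cp Cm : ℝ)
    (hUp : Up = 1) (hUm : Um = -(11/10)) (hCp : Cp = 1) (hCm : Cm = -(11/10))
    (p : ℝ → ℝ) (hpx : p x = 1) (hpx' : p (x - ε) = 11/21) :
    let Eu : ℝ → ℝ := fun s => p s * Up + (1 - p s) * Um
    let Ed : ℝ → ℝ := fun s => p s * Cp + (1 - p s) * Cm
    -- a policy is a pair (a, b): the selection probabilities π_A(x) and π_B(x')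
    let V : ℝ → ℝ → ℝ := fun a b => (1/2) * (a * Eu x) + (1/2) * (b * Eu (x - ε))
    let gap : ℝ → ℝ → ℝ := fun a b =>
      |(x + a * Ed x) - ((x - ε) + b * Ed (x - ε))|
    -- (i)
    (Eu x = 1 ∧ Ed x = 1 ∧ Eu (x - ε) = 0 ∧ Ed (x - ε) = 0) ∧
    -- (ii) OPT = 1/2, attained by selecting all of group A
    (V 1 0 = 1/2 ∧
      ∀ a ∈ Set.Icc (0 : ℝ) 1, ∀ b ∈ Set.Icc (0 : ℝ) 1, V a b ≤ 1/2) ∧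
    -- (iii) every α-fair policy has π_A(x) ≤ α − ε and utility ≤ (α−ε)/2
    (∀ a ∈ Set.Icc (0 : ℝ) 1, ∀ b ∈ Set.Icc (0 : ℝ) 1, gap a b ≤ α →
      a ≤ α - ε ∧ V a b ≤ (α - ε) / 2) ∧
    -- consequently, PoF ≥ 1 − (α − ε) ≥ 1 − α on this instance
    (∀ a ∈ Set.Icc (0 : ℝ) 1, ∀ b ∈ Set.Icc (0 : ℝ) 1, gap a b ≤ α →
      1 - (α - ε) ≤ 1 - V a b / V 1 0 ∧ 1 - α ≤ 1 - V a b / V 1 0) := by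
  obtain ⟨hα0, hα1⟩ := hα
  obtain ⟨hε0, hεα⟩ := hε
  intro Eu Ed V gap
  have hEux : Eu x = 1 := by simp [Eu, hpx, hUp, hUm]
  have hEdx : Ed x = 1 := by simp [Ed, hpx, hCp, hCm]
  have hEux' : Eu (x - ε) = 0 := by norm_num [Eu, hpx', hUp, hUm]
  have hEdx' : Ed (x - ε) = 0 := by norm_num [Ed, hpx', hCp, hCm]
  have hV : ∀ a b : ℝ, V a b = a / 2 := by
    intro a b; simp [V, hEux, hEux']; ring
  have hgap : ∀ a b : ℝ, 0 ≤ a → gap a b = a + ε := by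
    intro a b ha
    have : (x + a * Ed x) - ((x - ε) + b * Ed (x - ε)) = a + ε := by
      rw [hEdx, hEdx']; ring
    rw [show gap a b = |(x + a * Ed x) - ((x - ε) + b * Ed (x - ε))| from rfl, this,
      abs_of_nonneg (by linarith)]
  refine ⟨⟨hEux, hEdx, hEux', hEdx'⟩, ⟨by rw [hV], ?_⟩, ?_, ?_⟩
  · intro a ha b hb; rw [hV]; linarith [ha.2]
  · intro a ha b hb hfair
    have := hgap a b ha.1
    constructor
    · linarith [hfair, this.symm.trans_le hfair]
    · rw [hV]; have : a + ε ≤ α := this ▸ hfair; linarith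
  · intro a ha b hb hfair
    have h1 : a + ε ≤ α := (hgap a b ha.1) ▸ hfair
    have hV10 : V 1 0 = 1/2 := by rw [hV]
    have : V a b / V 1 0 = a := by rw [hV, hV10]; ring
    rw [this]
    constructor <;> linarith
end

section
/- Fix ε ∈ (0,1), η > 0 and α ≥ 0. Consider the instance with U⁺ = 1, U⁻ = −11/10, C⁺ = 1, C⁻ = −11/10, w_A = w_B = 1/2, where D_A places mass ε at a score x with p(x) = 1 and mass 1−ε at a score x'' with p(x'') = 0, and D_B places mass ε at x' = x − η with p(x') = 11/21 and mass 1−ε at the same x'' (with x'' < x'). Then: (i) the total variation distance between D_A and D_B equals ε; (ii) x'' lies in category C₄ since E[u(x'')] = −11/10 < 0 and E[Δ(x'')] = −11/10 < 0; (iii) OPT = ε/2; (iv) every non-degrading α-fair policy satisfies π_A(x) ≤ α/ε − η and hence has utility at most (α − εη)/2. Consequently, the restriction of the Price of Fairness to non-degrading policies on this instance is at least 1 − (α/ε − η). -/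
/-!
`A` and `B` share the degrading atom `x''`, and differ only in where their mass `ε` sits: at `x`
for `A`, at `x' = x − η` for `B`. With `p(x') = 11/21`, selecting `x'` has expected utility and
expected improvement both zero, so the only policy lever is `a = π_A(x)`: the utility is `a ε / 2`
and the mean gap is `ε (η + a)`. Fairness then caps `a` at `α / ε − η`.
-/

noncomputable def twoPoint (y z m : ℝ) : ℝ → ℝ :=
  fun s => if s = y then m else if s = z then 1 - m else 0

section twoPoint

variable {y y' z m s : ℝ}

@[simp]
theorem twoPoint_apply_left : twoPoint y z m y = m := if_pos rfl

theorem twoPoint_apply_right (hzy : z ≠ y) : twoPoint y z m z = 1 - m := by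
  simp [twoPoint, hzy]

theorem twoPoint_apply_of_ne (hy : s ≠ y) (hz : s ≠ z) : twoPoint y z m s = 0 := by
  simp [twoPoint, hy, hz]

theorem twoPoint_eq_of_ne (hy : s ≠ y) (hy' : s ≠ y') (hz : s ≠ z) :
    twoPoint y z m s = twoPoint y' z m s := by
  rw [twoPoint_apply_of_ne hy hz, twoPoint_apply_of_ne hy' hz]

theorem tv_twoPoint_shift (hm : 0 ≤ m) (hyy' : y' ≠ y) (hzy : z ≠ y) (hzy' : z ≠ y') :
    (1/2) * (|twoPoint y z m y - twoPoint y' z m y| + |twoPoint y z m y' - twoPoint y' z m y'|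
      + |twoPoint y z m z - twoPoint y' z m z|) = m := by
  rw [twoPoint_apply_left, twoPoint_apply_of_ne hyy'.symm hzy.symm, twoPoint_apply_left,
    twoPoint_apply_of_ne hyy' hzy'.symm, twoPoint_apply_right hzy, twoPoint_apply_right hzy']
  rw [sub_zero, zero_sub, abs_neg, sub_self, abs_zero, abs_of_nonneg hm]
  ring

end twoPoint

theorem le_div_sub_of_mul_add_le {ε η a α : ℝ} (hε : 0 < ε) (h : ε * (η + a) ≤ α) :
    a ≤ α / ε - η := by
  rw [le_sub_iff_add_le, le_div_iff₀ hε]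
  linarith

theorem pof_lower_bound_small_tv_instance_general
    (ε η α x x'' : ℝ) (hε : ε ∈ Set.Ioo (0 : ℝ) 1) (hη : 0 < η)
    (hx'' : x'' < x - η)
    (Up Um Cp Cm : ℝ)
    (hUp : Up = 1) (hUm : Um = -(11/10)) (hCp : Cp = 1) (hCm : Cm = -(11/10))
    (p : ℝ → ℝ) (hpx : p x = 1) (hpx' : p (x - η) = 11/21) (hpx'' : p x'' = 0)
    (DA DB : ℝ → ℝ)
    (hDA : DA = fun s => if s = x then ε else if s = x'' then 1 - ε else 0)
    (hDB : DB = fun s => if s = x - η then ε else if s = x'' then 1 - ε else 0) :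
    let Eu : ℝ → ℝ := fun s => p s * Up + (1 - p s) * Um
    let Ed : ℝ → ℝ := fun s => p s * Cp + (1 - p s) * Cm
    -- a policy is a quadruple (a, a'', b, b''): the selection probabilities
    -- π_A(x), π_A(x''), π_B(x'), π_B(x'')
    let V : ℝ → ℝ → ℝ → ℝ → ℝ := fun a a'' b b'' =>
      (1/2) * (a * DA x * Eu x + a'' * DA x'' * Eu x'') +
      (1/2) * (b * DB (x - η) * Eu (x - η) + b'' * DB x'' * Eu x'')
    let gap : ℝ → ℝ → ℝ → ℝ → ℝ := fun a a'' b b'' =>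
      |((DA x * x + DA x'' * x'') + (a * DA x * Ed x + a'' * DA x'' * Ed x'')) -
        ((DB (x - η) * (x - η) + DB x'' * x'') +
          (b * DB (x - η) * Ed (x - η) + b'' * DB x'' * Ed x''))|
    -- (i) total variation distance between D_A and D_B equals ε
    ((1/2) * (|DA x - DB x| + |DA (x - η) - DB (x - η)| + |DA x'' - DB x''|) = ε ∧
      ∀ s, s ≠ x → s ≠ x - η → s ≠ x'' → DA s = DB s) ∧
    -- (ii) x'' is in category C₄
    (Eu x'' = -(11/10) ∧ Eu x'' < 0 ∧ Ed x'' = -(11/10) ∧ Ed x'' < 0) ∧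
    -- (iii) OPT = ε/2
    (V 1 0 0 0 = ε / 2 ∧
      ∀ a ∈ Set.Icc (0 : ℝ) 1, ∀ a'' ∈ Set.Icc (0 : ℝ) 1,
        ∀ b ∈ Set.Icc (0 : ℝ) 1, ∀ b'' ∈ Set.Icc (0 : ℝ) 1,
          V a a'' b b'' ≤ ε / 2) ∧
    -- (iv) every non-degrading α-fair policy satisfies π_A(x) ≤ α/ε − η
    -- and has utility at most (α − εη)/2
    (∀ a ∈ Set.Icc (0 : ℝ) 1, ∀ b ∈ Set.Icc (0 : ℝ) 1, gap a 0 b 0 ≤ α →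
      a ≤ α / ε - η ∧ V a 0 b 0 ≤ (α - ε * η) / 2) ∧
    -- consequently the PoF restricted to non-degrading policies is at least
    -- 1 − (α/ε − η)
    (∀ a ∈ Set.Icc (0 : ℝ) 1, ∀ b ∈ Set.Icc (0 : ℝ) 1, gap a 0 b 0 ≤ α →
      1 - (α / ε - η) ≤ 1 - V a 0 b 0 / (ε / 2))
:= by
  obtain ⟨hε0, hε1⟩ := hε
  subst hUp hUm hCp hCm
  obtain rfl : DA = twoPoint x x'' ε := hDA
  obtain rfl : DB = twoPoint (x - η) x'' ε := hDB
  have hx'x : x - η ≠ x := by linarith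
  have hx''x : x'' ≠ x := by linarith
  have hx''x' : x'' ≠ x - η := hx''.ne
  intro Eu Ed V gap
  have hEu'' : Eu x'' = -(11/10) := by simp [Eu, hpx'']
  have hEd'' : Ed x'' = -(11/10) := by simp [Ed, hpx'']
  have hV : ∀ a a'' b b'', V a a'' b b'' = (a * ε - 11/10 * (1 - ε) * (a'' + b'')) / 2 := by
    intro a a'' b b''
    simp only [V, Eu, twoPoint_apply_left, twoPoint_apply_right hx''x,
      twoPoint_apply_right hx''x', hpx, hpx', hpx'']
    ring
  have hgap : ∀ a, 0 ≤ a → ∀ b, gap a 0 b 0 = ε * (η + a) := by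
    intro a ha b
    simp only [gap, Ed, twoPoint_apply_left, twoPoint_apply_right hx''x,
      twoPoint_apply_right hx''x', hpx, hpx']
    rw [abs_eq_self.mpr (by nlinarith)]
    ring
  refine ⟨⟨tv_twoPoint_shift hε0.le hx'x hx''x hx''x',
      fun s hs hs' hs'' => twoPoint_eq_of_ne hs hs' hs''⟩,
    ⟨hEu'', by norm_num [hEu''], hEd'', by norm_num [hEd'']⟩,
    ⟨by rw [hV]; ring, fun a ha a'' ha'' b _ b'' hb'' => ?_⟩,
    fun a ha b _ h => ⟨le_div_sub_of_mul_add_le hε0 (hgap a ha.1 b ▸ h), ?_⟩, fun a ha b _ h => ?_⟩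
  · rw [hV]
    nlinarith [ha.2, mul_nonneg (add_nonneg ha''.1 hb''.1) (sub_nonneg.mpr hε1.le)]
  · rw [hV]
    linarith [hgap a ha.1 b ▸ h]
  · rw [hV, show (a * ε - 11/10 * (1 - ε) * (0 + 0)) / 2 / (ε / 2) = a by field_simp; ring]
    linarith [le_div_sub_of_mul_add_le hε0 (hgap a ha.1 b ▸ h)]

/-- **Theorem 3.13 / Proposition A.3 construction.** For the
instance with `U⁺ = 1`, `U⁻ = −11/10`, `C⁺ = 1`, `C⁻ = −11/10`, equal group
weights, where `D_A` places mass `ε` at `x` (with `p(x) = 1`) and mass `1−ε` at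
`x''` (with `p(x'') = 0`), and `D_B` places mass `ε` at `x' = x − η` (with
`p(x') = 11/21`) and mass `1−ε` at the same `x''` (with `x'' < x'`):
(i) the total variation distance between `D_A` and `D_B` is `ε`;
(ii) `x''` is in category `C₄`; (iii) `OPT = ε/2`; (iv) every non-degrading
`α`-fair policy has `π_A(x) ≤ α/ε − η` and utility at most `(α − εη)/2`;
hence the PoF restricted to non-degrading policies is at least `1 − (α/ε − η)`. -/
theorem pof_lower_bound_small_tv_instance
    (ε η α x x'' : ℝ) (hε : ε ∈ Set.Ioo (0 : ℝ) 1) (hη : 0 < η) (hα : 0 ≤ α)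
    (hx'' : x'' < x - η)
    (Up Um Cp Cm : ℝ)
    (hUp : Up = 1) (hUm : Um = -(11/10)) (hCp : Cp = 1) (hCm : Cm = -(11/10))
    (p : ℝ → ℝ) (hpx : p x = 1) (hpx' : p (x - η) = 11/21) (hpx'' : p x'' = 0)
    (DA DB : ℝ → ℝ)
    (hDA : DA = fun s => if s = x then ε else if s = x'' then 1 - ε else 0)
    (hDB : DB = fun s => if s = x - η then ε else if s = x'' then 1 - ε else 0) :
    let Eu : ℝ → ℝ := fun s => p s * Up + (1 - p s) * Um
    let Ed : ℝ → ℝ := fun s => p s * Cp + (1 - p s) * Cm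
    -- a policy is a quadruple (a, a'', b, b''): the selection probabilities
    -- π_A(x), π_A(x''), π_B(x'), π_B(x'')
    let V : ℝ → ℝ → ℝ → ℝ → ℝ := fun a a'' b b'' =>
      (1/2) * (a * DA x * Eu x + a'' * DA x'' * Eu x'') +
      (1/2) * (b * DB (x - η) * Eu (x - η) + b'' * DB x'' * Eu x'')
    let gap : ℝ → ℝ → ℝ → ℝ → ℝ := fun a a'' b b'' =>
      |((DA x * x + DA x'' * x'') + (a * DA x * Ed x + a'' * DA x'' * Ed x'')) -
        ((DB (x - η) * (x - η) + DB x'' * x'') +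
          (b * DB (x - η) * Ed (x - η) + b'' * DB x'' * Ed x''))|
    -- (i) total variation distance between D_A and D_B equals ε
    ((1/2) * (|DA x - DB x| + |DA (x - η) - DB (x - η)| + |DA x'' - DB x''|) = ε ∧
      ∀ s, s ≠ x → s ≠ x - η → s ≠ x'' → DA s = DB s) ∧
    -- (ii) x'' is in category C₄
    (Eu x'' = -(11/10) ∧ Eu x'' < 0 ∧ Ed x'' = -(11/10) ∧ Ed x'' < 0) ∧
    -- (iii) OPT = ε/2
    (V 1 0 0 0 = ε / 2 ∧
      ∀ a ∈ Set.Icc (0 : ℝ) 1, ∀ a'' ∈ Set.Icc (0 : ℝ) 1,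
        ∀ b ∈ Set.Icc (0 : ℝ) 1, ∀ b'' ∈ Set.Icc (0 : ℝ) 1,
          V a a'' b b'' ≤ ε / 2) ∧
    -- (iv) every non-degrading α-fair policy satisfies π_A(x) ≤ α/ε − η
    -- and has utility at most (α − εη)/2
    (∀ a ∈ Set.Icc (0 : ℝ) 1, ∀ b ∈ Set.Icc (0 : ℝ) 1, gap a 0 b 0 ≤ α →
      a ≤ α / ε - η ∧ V a 0 b 0 ≤ (α - ε * η) / 2) ∧
    -- consequently the PoF restricted to non-degrading policies is at least
    -- 1 − (α/ε − η)
    (∀ a ∈ Set.Icc (0 : ℝ) 1, ∀ b ∈ Set.Icc (0 : ℝ) 1, gap a 0 b 0 ≤ α →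
      1 - (α / ε - η) ≤ 1 - V a 0 b 0 / (ε / 2)) :=
  pof_lower_bound_small_tv_instance_general ε η α x x'' hε hη hx'' Up Um Cp Cm hUp hUm hCp hCm p hpx
    hpx' hpx'' DA DB hDA hDB
end

section
/- Let k > 0 and define the logistic success probability p(x) = 1/(1 + exp(−k·x)). If C⁺ ≥ (ln 6)/k, then for every x ≥ 0, 1 − p(x + C⁺) ≤ (1/3)·(1 − p(x)). In particular, logistic success probabilities satisfy Assumption 5 (the geometric failure-decay condition) for scores x ≥ 0 whenever the score increment C⁺ is at least (ln 6)/k. -/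
/-!
The failure probability of the logistic model is `1 - σ(kx) = σ(-kx)`, and for `t ≥ 0` the tail
`σ(-t) = 1/(1 + eᵗ)` lies between `e⁻ᵗ/2` and `e⁻ᵗ`. Shifting the score by `C⁺` therefore shrinks
the failure probability by at most the factor `2 e^{-kC⁺} ≤ 2/6 = 1/3`.
-/

open Real

namespace Real

lemma sigmoid_neg_le_exp_neg (t : ℝ) : sigmoid (-t) ≤ exp (-t) := by
  rw [← sigmoid_mul_rexp_neg]
  exact mul_le_of_le_one_left (exp_pos _).le (sigmoid_le_one t)

lemma exp_neg_le_two_mul_sigmoid_neg {t : ℝ} (ht : 0 ≤ t) : exp (-t) ≤ 2 * sigmoid (-t) := by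
  have hhalf : 2⁻¹ ≤ sigmoid t := sigmoid_zero ▸ sigmoid_le ht
  rw [← sigmoid_mul_rexp_neg]
  nlinarith [exp_pos (-t)]

lemma sigmoid_neg_add_le {t : ℝ} (ht : 0 ≤ t) (s : ℝ) :
    sigmoid (-(t + s)) ≤ 2 * exp (-s) * sigmoid (-t) :=
  calc sigmoid (-(t + s)) ≤ exp (-(t + s)) := sigmoid_neg_le_exp_neg _
    _ = exp (-s) * exp (-t) := by rw [← exp_add]; ring_nf
    _ ≤ exp (-s) * (2 * sigmoid (-t)) := by gcongr; exact exp_neg_le_two_mul_sigmoid_neg ht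
    _ = 2 * exp (-s) * sigmoid (-t) := by ring

lemma exp_neg_le_inv_of_log_le {a b : ℝ} (hb : 0 < b) (h : log b ≤ a) : exp (-a) ≤ b⁻¹ := by
  rw [← exp_log hb, ← exp_neg]
  exact exp_le_exp.mpr (neg_le_neg h)

end Real

/-- The logistic success probability
`p(x) = 1/(1 + exp(−k·x))` with `k > 0` satisfies the geometric failure-decay
condition (Assumption 5) for scores `x ≥ 0` whenever the score increment
satisfies `C⁺ ≥ (ln 6)/k`. -/
theorem logistic_satisfies_geometric_failure_decay
    (k Cp : ℝ) (hk : 0 < k) (hCp : Real.log 6 / k ≤ Cp)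
    (p : ℝ → ℝ) (hp : ∀ x, p x = 1 / (1 + Real.exp (-(k * x)))) :
    ∀ x : ℝ, 0 ≤ x → 1 - p (x + Cp) ≤ (1/3) * (1 - p x) := by
  intro x hx
  have hfailure : ∀ y, 1 - p y = sigmoid (-(k * y)) := fun y => by
    rw [sigmoid_neg, sigmoid_def, hp, one_div]
  have hdecay : exp (-(k * Cp)) ≤ 6⁻¹ :=
    exp_neg_le_inv_of_log_le (by norm_num) ((div_le_iff₀' hk).mp hCp)
  rw [hfailure, hfailure, mul_add]
  calc sigmoid (-(k * x + k * Cp)) ≤ 2 * exp (-(k * Cp)) * sigmoid (-(k * x)) :=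
        sigmoid_neg_add_le (by positivity) _
    _ ≤ 1 / 3 * sigmoid (-(k * x)) :=
        mul_le_mul_of_nonneg_right (by linarith) (sigmoid_nonneg _)
end
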